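/- arXiv:1402.3125 — 5 statements merged into one kernel-verified Lean document; each statement's English description precedes it below -/
import Mathlib

section
/- Let X and A be random variables with finite ranges and let L be a {0,1}-valued random variable on the same probability space. Assume that conditioned on L=0 the message A is independent of X, i.e. Pr(A=a | X=x, L=0) = Pr(A=a | L=0) for all a and all x with Pr(X=x, L=0) > 0, and assume Pr(L=0 | X=x, A=a) > 0 whenever Pr(X=x, A=a) > 0. Then the mutual information satisfies I(X;A) ≤ susp(X,A) − susp(X); that is, the amount of information A reveals about X is at most the expected increase in suspicion given X. -/
/-!
By conditional independence, `Pr(L=0, X=x, A=a) = Pr(A=a | L=0) · Pr(L=0, X=x)`, so for each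
`(x, a)` the suspicion increase `log (Pr(L=0 | X=x) / Pr(L=0 | X=x, A=a))` minus the pointwise
mutual information `log (Pr(x, a) / (Pr(x) Pr(a)))` equals `log (Pr(A=a) / Pr(A=a | L=0))`.
Averaging over `(x, a)`, the gap `susp(X,A) − susp(X) − I(X;A)` is the Kullback–Leibler divergence
of the law of `A` from its law given `L = 0`, which is nonnegative by Gibbs' inequality.
-/

open Finset

/-- Probability of an event `E` under the probability mass function `p`
on a finite sample space `Ω`. -/
noncomputable def Pr {Ω : Type*} [Fintype Ω] (p : Ω → ℝ) (E : Set Ω) : ℝ :=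
  ∑ ω, E.indicator p ω

/-- Conditional probability `Pr(E | F)`. -/
noncomputable def cPr {Ω : Type*} [Fintype Ω] (p : Ω → ℝ) (E F : Set Ω) : ℝ :=
  Pr p (E ∩ F) / Pr p F

/-- The suspicion given a random variable `Yv`:
`susp(Y) = Σ_y Pr(Y=y) · (−log₂ Pr(L=0 | Y=y))`. -/
noncomputable def susp {Ω Y : Type*} [Fintype Ω] [Fintype Y] (p : Ω → ℝ)
    (L : Ω → Bool) (Yv : Ω → Y) : ℝ :=
  ∑ y, Pr p {ω | Yv ω = y} * (-Real.logb 2 (cPr p {ω | L ω = false} {ω | Yv ω = y}))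

/-- Mutual information (base 2) between two finite-valued random variables. -/
noncomputable def mutInfo {Ω S T : Type*} [Fintype Ω] [Fintype S] [Fintype T]
    (p : Ω → ℝ) (Xv : Ω → S) (Av : Ω → T) : ℝ :=
  ∑ x, ∑ a, Pr p {ω | Xv ω = x ∧ Av ω = a} *
    Real.logb 2 (Pr p {ω | Xv ω = x ∧ Av ω = a} /
      (Pr p {ω | Xv ω = x} * Pr p {ω | Av ω = a}))

/-- Conditional Shannon entropy (base 2) `H(A | X)`. -/
noncomputable def condEntropy {Ω S T : Type*} [Fintype Ω] [Fintype S] [Fintype T]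
    (p : Ω → ℝ) (Av : Ω → T) (Xv : Ω → S) : ℝ :=
  ∑ x, ∑ a, Pr p {ω | Xv ω = x ∧ Av ω = a} *
    Real.logb 2 (Pr p {ω | Xv ω = x} / Pr p {ω | Xv ω = x ∧ Av ω = a})

/-- Conditional mutual information (base 2) `I(X; A | Z)`. -/
noncomputable def condMutInfo {Ω S T U : Type*} [Fintype Ω] [Fintype S] [Fintype T] [Fintype U]
    (p : Ω → ℝ) (Xv : Ω → S) (Av : Ω → T) (Zv : Ω → U) : ℝ :=
  ∑ z, ∑ x, ∑ a, Pr p {ω | Xv ω = x ∧ Av ω = a ∧ Zv ω = z} *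
    Real.logb 2 ((Pr p {ω | Xv ω = x ∧ Av ω = a ∧ Zv ω = z} * Pr p {ω | Zv ω = z}) /
      (Pr p {ω | Xv ω = x ∧ Zv ω = z} * Pr p {ω | Av ω = a ∧ Zv ω = z}))

lemma sub_le_mul_log_div {x y : ℝ} (hx : 0 ≤ x) (hy : 0 ≤ y) (hxy : 0 < x → 0 < y) :
    x - y ≤ x * Real.log (x / y) := by
  rcases hx.eq_or_lt with rfl | hx
  · simpa using hy
  have h := Real.one_sub_inv_le_log_of_pos (div_pos hx (hxy hx))
  rw [inv_div] at h
  calc x - y = x * (1 - y / x) := by field_simp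
    _ ≤ x * Real.log (x / y) := mul_le_mul_of_nonneg_left h hx.le

lemma sum_mul_logb_div_nonneg {ι : Type*} [Fintype ι] {b : ℝ} (hb : 1 < b) (P Q : ι → ℝ)
    (hP : ∀ i, 0 ≤ P i) (hQ : ∀ i, 0 ≤ Q i) (hPQ : ∀ i, 0 < P i → 0 < Q i)
    (hsum : ∑ i, Q i ≤ ∑ i, P i) :
    0 ≤ ∑ i, P i * Real.logb b (P i / Q i) := by
  have hlog : 0 ≤ ∑ i, P i * Real.log (P i / Q i) :=
    calc (0 : ℝ) ≤ ∑ i, (P i - Q i) := by rw [Finset.sum_sub_distrib]; linarith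
      _ ≤ _ := Finset.sum_le_sum fun i _ => sub_le_mul_log_div (hP i) (hQ i) (hPQ i)
  simp only [Real.logb, ← mul_div_assoc, ← Finset.sum_div]
  exact div_nonneg hlog (Real.log_pos hb).le

section Probability

variable {Ω : Type*} [Fintype Ω] {p : Ω → ℝ}

lemma Pr_nonneg (hp : ∀ ω, 0 ≤ p ω) (E : Set Ω) : 0 ≤ Pr p E :=
  Finset.sum_nonneg fun ω _ => Set.indicator_nonneg (fun ω _ => hp ω) ω

lemma Pr_mono (hp : ∀ ω, 0 ≤ p ω) {E F : Set Ω} (h : E ⊆ F) : Pr p E ≤ Pr p F :=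
  Finset.sum_le_sum fun ω _ => Set.indicator_le_indicator_of_subset h hp ω

lemma le_Pr (hp : ∀ ω, 0 ≤ p ω) {E : Set Ω} {ω : Ω} (hω : ω ∈ E) : p ω ≤ Pr p E := by
  simpa [Pr, Set.indicator_of_mem hω] using Finset.single_le_sum
    (f := fun ω => E.indicator p ω) (fun ω _ => Set.indicator_nonneg (fun ω _ => hp ω) ω)
    (Finset.mem_univ ω)

lemma Pr_univ : Pr p Set.univ = ∑ ω, p ω := by
  simp [Pr]

lemma Pr_eq_sum_preimage_inter {T : Type*} [Fintype T] (A : Ω → T) (E : Set Ω) :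
    Pr p E = ∑ a, Pr p ({ω | A ω = a} ∩ E) := by
  classical
  rw [Pr, ← Finset.sum_fiberwise Finset.univ A]
  refine Finset.sum_congr rfl fun a _ => ?_
  rw [Finset.sum_filter, Pr]
  refine Finset.sum_congr rfl fun ω _ => ?_
  by_cases h : A ω = a <;> simp [Set.indicator, h]

lemma Pr_eq_sum_Pr_and_left {S T : Type*} [Fintype T] (X : Ω → S) (A : Ω → T) (x : S) :
    Pr p {ω | X ω = x} = ∑ a, Pr p {ω | X ω = x ∧ A ω = a} := by
  rw [Pr_eq_sum_preimage_inter A]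
  simp only [Set.inter_comm {ω | A ω = _}]
  rfl

lemma Pr_eq_sum_Pr_and_right {S T : Type*} [Fintype S] (X : Ω → S) (A : Ω → T) (a : T) :
    Pr p {ω | A ω = a} = ∑ x, Pr p {ω | X ω = x ∧ A ω = a} :=
  Pr_eq_sum_preimage_inter X _

lemma Pr_pos_of_cPr_pos (hp : ∀ ω, 0 ≤ p ω) {E F : Set Ω} (h : 0 < cPr p E F) :
    0 < Pr p (E ∩ F) :=
  (Pr_nonneg hp _).lt_of_ne fun h0 => by simp [cPr, ← h0] at h

lemma cPr_mul_Pr {E F : Set Ω} (hF : Pr p F ≠ 0) : cPr p E F * Pr p F = Pr p (E ∩ F) :=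
  div_mul_cancel₀ _ hF

lemma sum_cPr_preimage {T : Type*} [Fintype T] (A : Ω → T) {F : Set Ω} (hF : Pr p F ≠ 0) :
    ∑ a, cPr p {ω | A ω = a} F = 1 := by
  simp only [cPr]
  rw [← Finset.sum_div, ← Pr_eq_sum_preimage_inter, div_self hF]

lemma logb_cPr_sub_logb_cPr_inter_sub_logb_eq (hp : ∀ ω, 0 ≤ p ω) {E F Z : Set Ω}
    (hEF : 0 < Pr p (E ∩ F)) (hZEF : 0 < cPr p Z (E ∩ F))
    (hindep : cPr p F (E ∩ Z) = cPr p F Z) :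
    Real.logb 2 (cPr p Z E) - Real.logb 2 (cPr p Z (E ∩ F)) -
        Real.logb 2 (Pr p (E ∩ F) / (Pr p E * Pr p F)) =
      Real.logb 2 (Pr p F / cPr p F Z) := by
  have hZEF' := Pr_pos_of_cPr_pos hp hZEF
  have hEZ : 0 < Pr p (E ∩ Z) := hZEF'.trans_le (Pr_mono hp fun ω h => ⟨h.2.1, h.1⟩)
  have hE : 0 < Pr p E := hEF.trans_le (Pr_mono hp Set.inter_subset_left)
  have hF : 0 < Pr p F := hEF.trans_le (Pr_mono hp Set.inter_subset_right)
  have hZ : 0 < Pr p Z := hZEF'.trans_le (Pr_mono hp Set.inter_subset_left)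
  have hq : 0 < cPr p F Z :=
    div_pos (hZEF'.trans_le (Pr_mono hp fun ω h => ⟨h.2.2, h.1⟩)) hZ
  have hfactor : Pr p (Z ∩ (E ∩ F)) = cPr p F Z * Pr p (E ∩ Z) := by
    rw [← hindep, cPr_mul_Pr hEZ.ne']
    congr 1
    ext ω
    simp only [Set.mem_inter_iff]
    tauto
  rw [cPr, cPr, hfactor, Set.inter_comm Z E, Real.logb_div hEZ.ne' hE.ne',
    Real.logb_div (mul_pos hq hEZ).ne' hEF.ne', Real.logb_mul hq.ne' hEZ.ne',
    Real.logb_div hEF.ne' (mul_pos hE hF).ne', Real.logb_mul hE.ne' hF.ne',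
    Real.logb_div hF.ne' hq.ne']
  ring

lemma susp_increase_sub_info_term_eq (hp : ∀ ω, 0 ≤ p ω) {E F Z : Set Ω}
    (hpos : 0 < Pr p (E ∩ F) → 0 < cPr p Z (E ∩ F))
    (hindep : 0 < Pr p (E ∩ Z) → cPr p F (E ∩ Z) = cPr p F Z) :
    Pr p (E ∩ F) * -Real.logb 2 (cPr p Z (E ∩ F)) - Pr p (E ∩ F) * -Real.logb 2 (cPr p Z E) -
        Pr p (E ∩ F) * Real.logb 2 (Pr p (E ∩ F) / (Pr p E * Pr p F)) =
      Pr p (E ∩ F) * Real.logb 2 (Pr p F / cPr p F Z) := by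
  rcases (Pr_nonneg hp (E ∩ F)).eq_or_lt with h0 | hEF
  · simp [← h0]
  have hZEF := hpos hEF
  have hEZ : 0 < Pr p (E ∩ Z) :=
    (Pr_pos_of_cPr_pos hp hZEF).trans_le (Pr_mono hp fun ω h => ⟨h.2.1, h.1⟩)
  linear_combination Pr p (E ∩ F) *
    logb_cPr_sub_logb_cPr_inter_sub_logb_eq hp hEF hZEF (hindep hEZ)

end Probability

section Suspicion

variable {Ω S T : Type*} [Fintype Ω] [Fintype S] [Fintype T] {p : Ω → ℝ}

lemma susp_prod (L : Ω → Bool) (X : Ω → S) (A : Ω → T) :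
    susp p L (fun ω => (X ω, A ω)) = ∑ x, ∑ a, Pr p {ω | X ω = x ∧ A ω = a} *
      -Real.logb 2 (cPr p {ω | L ω = false} {ω | X ω = x ∧ A ω = a}) := by
  simp only [susp, Fintype.sum_prod_type, Prod.mk.injEq]

lemma susp_eq_sum_joint (L : Ω → Bool) (X : Ω → S) (A : Ω → T) :
    susp p L X = ∑ x, ∑ a, Pr p {ω | X ω = x ∧ A ω = a} *
      -Real.logb 2 (cPr p {ω | L ω = false} {ω | X ω = x}) := by
  refine Finset.sum_congr rfl fun x _ => ?_
  rw [← Finset.sum_mul, ← Pr_eq_sum_Pr_and_left]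

lemma susp_prod_sub_susp_sub_mutInfo_eq (hp : ∀ ω, 0 ≤ p ω) (X : Ω → S) (A : Ω → T)
    (L : Ω → Bool)
    (hindep : ∀ (a : T) (x : S), 0 < Pr p {ω | X ω = x ∧ L ω = false} →
      cPr p {ω | A ω = a} {ω | X ω = x ∧ L ω = false} =
        cPr p {ω | A ω = a} {ω | L ω = false})
    (hpos : ∀ (x : S) (a : T), 0 < Pr p {ω | X ω = x ∧ A ω = a} →
      0 < cPr p {ω | L ω = false} {ω | X ω = x ∧ A ω = a}) :
    susp p L (fun ω => (X ω, A ω)) - susp p L X - mutInfo p X A =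
      ∑ a, Pr p {ω | A ω = a} *
        Real.logb 2 (Pr p {ω | A ω = a} / cPr p {ω | A ω = a} {ω | L ω = false}) := by
  simp only [mutInfo, susp_prod, susp_eq_sum_joint L X A, ← Finset.sum_sub_distrib]
  calc _ = ∑ x, ∑ a, Pr p {ω | X ω = x ∧ A ω = a} *
        Real.logb 2 (Pr p {ω | A ω = a} / cPr p {ω | A ω = a} {ω | L ω = false}) :=
      Finset.sum_congr rfl fun x _ => Finset.sum_congr rfl fun a _ =>
        susp_increase_sub_info_term_eq (E := {ω | X ω = x}) (F := {ω | A ω = a})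
          (Z := {ω | L ω = false}) hp (hpos x a) (hindep a x)
    _ = _ := by
      rw [Finset.sum_comm]
      simp only [← Finset.sum_mul, ← Pr_eq_sum_Pr_and_right]

end Suspicion

/-- If `A` is independent of `X` conditioned on `L = 0`, then
`I(X;A) ≤ susp(X,A) − susp(X)`. -/
theorem info_le_susp_increase {Ω S T : Type*} [Fintype Ω] [Fintype S] [Fintype T]
    (p : Ω → ℝ) (hp : ∀ ω, 0 ≤ p ω) (hp1 : ∑ ω, p ω = 1)
    (X : Ω → S) (A : Ω → T) (L : Ω → Bool)
    (hindep : ∀ (a : T) (x : S), 0 < Pr p {ω | X ω = x ∧ L ω = false} →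
      cPr p {ω | A ω = a} {ω | X ω = x ∧ L ω = false} =
        cPr p {ω | A ω = a} {ω | L ω = false})
    (hpos : ∀ (x : S) (a : T), 0 < Pr p {ω | X ω = x ∧ A ω = a} →
      0 < cPr p {ω | L ω = false} {ω | X ω = x ∧ A ω = a}) :
    mutInfo p X A ≤ susp p L (fun ω => (X ω, A ω)) - susp p L X := by
  have hLpos : ∀ x a, 0 < Pr p {ω | X ω = x ∧ A ω = a} →
      0 < Pr p ({ω | L ω = false} ∩ {ω | X ω = x ∧ A ω = a}) :=
    fun x a h => Pr_pos_of_cPr_pos hp (hpos x a h)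
  have hZ : 0 < Pr p {ω | L ω = false} := by
    obtain ⟨ω, -, hω⟩ := Finset.exists_lt_of_sum_lt (by simp [hp1] : ∑ _ : Ω, (0 : ℝ) < ∑ ω, p ω)
    exact (hLpos (X ω) (A ω) (hω.trans_le (le_Pr hp ⟨rfl, rfl⟩))).trans_le
      (Pr_mono hp Set.inter_subset_left)
  have hq : ∀ a, 0 < Pr p {ω | A ω = a} → 0 < cPr p {ω | A ω = a} {ω | L ω = false} := by
    intro a ha
    rw [Pr_eq_sum_Pr_and_right X] at ha
    obtain ⟨x, -, hx⟩ := Finset.exists_lt_of_sum_lt (by simpa using ha :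
      ∑ _ : S, (0 : ℝ) < ∑ x, Pr p {ω | X ω = x ∧ A ω = a})
    exact div_pos ((hLpos x a hx).trans_le (Pr_mono hp fun ω h => ⟨h.2.2, h.1⟩)) hZ
  have hmass : ∑ a, cPr p {ω | A ω = a} {ω | L ω = false} ≤ ∑ a, Pr p {ω | A ω = a} := by
    rw [sum_cPr_preimage A hZ.ne', ← hp1, ← Pr_univ, Pr_eq_sum_preimage_inter A]
    simp only [Set.inter_univ, le_refl]
  have hKL := sum_mul_logb_div_nonneg one_lt_two (fun a => Pr p {ω | A ω = a})
    (fun a => cPr p {ω | A ω = a} {ω | L ω = false}) (fun a => Pr_nonneg hp _)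
    (fun a => div_nonneg (Pr_nonneg hp _) hZ.le) hq hmass
  linarith [susp_prod_sub_susp_sub_mutInfo_eq hp X A L hindep hpos]
end

section
/- Let a, d be positive integers with 0 < a < d and let 0 < b < c < 1 satisfy a/d = b(1−c)/(c(1−b)). Let X be uniformly distributed on {1,…,d}, let L be {0,1}-valued with Pr(L=1)=b and independent of X, and let the message A be distributed as follows: given L=0, A is uniform on {1,…,d} and independent of X; given L=1 and X=x, A is uniform on the set {1+(x−1)a, 2+(x−1)a, …, xa} reduced modulo d into {1,…,d}. Then I(A;X) = (−b·log(1−c) + c·log(1−b))/c. -/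
open Finset

/-!
Given `X = x`, the message `A` is uniform on `{1, …, d}` with probability `1 - b` and uniform on
the window `S_x` of `a` consecutive residues with probability `b`. The pairs `(x, j)` with `j < a`
index the integers `x a + j < d a`, which meet every residue class mod `d` exactly `a` times; so
every residue lies in exactly `a` windows and `A` is uniform as well. The joint law of `(A, X)`
then has density `(1 - b) / (1 - c)` on the windows and `1 - b` off them with respect to the
product of the marginals (the ratio condition is what makes the first value come out this way),
and `A` falls into the window of `X` with probability `b / c`. Hence
`I(A;X) = (b/c) log((1 - b)/(1 - c)) + (1 - b/c) log(1 - b)`.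
-/

/-- The window `S_x` in 0-based form: `x : Fin d` stands for `x + 1`, so that
`S_x = {1 + (x - 1)a, …, xa} mod d` becomes `{(x * a + j) % d | j < a}`. -/
def InWindow (a d : ℕ) (x t : Fin d) : Prop :=
  ∃ j < a, (t : ℕ) = ((x : ℕ) * a + j) % d

instance (a d : ℕ) (x t : Fin d) : Decidable (InWindow a d x t) :=
  inferInstanceAs (Decidable (∃ j < a, _))

lemma card_filter_mul_add_mod_eq (a d : ℕ) (t : Fin d) :
    #{q : Fin d × Fin a | ((q.1 : ℕ) * a + q.2) % d = t} = a := by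
  let e : Fin d × Fin a ≃ Fin a × Fin d :=
    finProdFinEquiv.trans ((finCongr (mul_comm d a)).trans finProdFinEquiv.symm)
  have he : ∀ q, ((e q).2 : ℕ) = ((q.1 : ℕ) * a + q.2) % d := fun q => by
    simp only [e, finProdFinEquiv, Fin.modNat, Equiv.symm_mk, Equiv.trans_apply,
      Equiv.coe_fn_mk, finCongr_apply, Fin.cast_mk]
    ring_nf
  calc #{q : Fin d × Fin a | ((q.1 : ℕ) * a + q.2) % d = t}
      = #{r : Fin a × Fin d | r.2 = t} := by
        refine Finset.card_equiv e fun q => ?_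
        simp [← he, Fin.ext_iff]
    _ = a := by rw [Finset.card_filter, Fintype.sum_prod_type]; simp

lemma card_filter_inWindow {a d : ℕ} (had : a ≤ d) (t : Fin d) :
    #{x | InWindow a d x t} = a := by
  refine .trans (.symm ?_) (card_filter_mul_add_mod_eq a d t)
  refine Finset.card_bij (fun q _ => q.1) ?_ ?_ ?_
  · simp only [mem_filter, mem_univ, true_and]
    exact fun q hq => ⟨q.2, q.2.isLt, hq.symm⟩
  · simp only [mem_filter, mem_univ, true_and]
    rintro ⟨x, j⟩ hj ⟨x', j'⟩ hj' (rfl : x = x')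
    have hjj' := (Nat.ModEq.add_left_cancel' _ (hj.trans hj'.symm)).eq_of_lt_of_lt
      (j.isLt.trans_le had) (j'.isLt.trans_le had)
    exact Prod.ext rfl (Fin.ext hjj')
  · simp only [mem_filter, mem_univ, true_and]
    rintro x ⟨j, hj, ht⟩
    exact ⟨(x, ⟨j, hj⟩), ht.symm, rfl⟩

section Pr

variable {Ω : Type*} [Fintype Ω] (p : Ω → ℝ)

lemma Pr_eq_sum_Pr_and_eq {S : Type*} [Fintype S] (X : Ω → S) (P : Ω → Prop) :
    Pr p {ω | P ω} = ∑ x, Pr p {ω | P ω ∧ X ω = x} := by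
  classical
  simp only [Pr, Set.indicator_apply, Set.mem_ofPred_eq]
  rw [Finset.sum_comm]
  refine Finset.sum_congr rfl fun ω _ => ?_
  by_cases hP : P ω <;> simp [hP]

lemma Pr_and_eq_add_Pr_and_bool {S T : Type*} (X : Ω → S) (A : Ω → T) (L : Ω → Bool)
    (x : S) (t : T) :
    Pr p {ω | A ω = t ∧ X ω = x} =
      Pr p {ω | X ω = x ∧ L ω = true ∧ A ω = t} + Pr p {ω | X ω = x ∧ L ω = false ∧ A ω = t} := by
  rw [Pr_eq_sum_Pr_and_eq p L, Fintype.sum_bool]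
  congr 2 <;> ext ω <;> simp only [Set.mem_ofPred_eq] <;> tauto

end Pr

lemma sum_ite_eq_of_card_filter {S R : Type*} [Fintype S] [Ring R] (P : S → Prop)
    [DecidablePred P] {k : ℕ} (hk : #{x | P x} = k) (f g : R) :
    ∑ x, (if P x then f else g) = k * f + (Fintype.card S - k) * g := by
  have hcompl : (#{x | ¬P x} : R) = Fintype.card S - k := by
    rw [eq_sub_iff_add_eq, ← hk, ← Nat.cast_add, add_comm, card_filter_add_card_filter_not,
      card_univ]
  rw [Finset.sum_ite, sum_const, sum_const, hk, nsmul_eq_mul, nsmul_eq_mul, hcompl]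

lemma mutInfo_eq_of_joint_eq_mul_ite {Ω S T : Type*} [Fintype Ω] [Fintype S] [Fintype T]
    (p : Ω → ℝ) (X : Ω → S) (A : Ω → T) (R : T → S → Prop) [DecidableRel R] {k : ℕ}
    (hR : ∀ t, #{x | R t x} = k) {u v r₁ r₂ : ℝ}
    (hX : ∀ x, Pr p {ω | X ω = x} = u) (hA : ∀ t, Pr p {ω | A ω = t} = v) (huv : v * u ≠ 0)
    (hjoint : ∀ t x, Pr p {ω | A ω = t ∧ X ω = x} = v * u * if R t x then r₁ else r₂) :
    mutInfo p A X =
      Fintype.card T * (v * u) * (k * (r₁ * Real.logb 2 r₁) +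
        (Fintype.card S - k) * (r₂ * Real.logb 2 r₂)) := by
  have hrow : ∀ t, ∑ x, (v * u * if R t x then r₁ else r₂) *
      Real.logb 2 ((v * u * if R t x then r₁ else r₂) / (v * u)) =
      v * u * (k * (r₁ * Real.logb 2 r₁) + (Fintype.card S - k) * (r₂ * Real.logb 2 r₂)) := by
    intro t
    rw [← sum_ite_eq_of_card_filter (R t) (hR t), mul_sum]
    refine sum_congr rfl fun x _ => ?_
    split_ifs <;> rw [mul_div_cancel_left₀ _ huv] <;> ring
  simp only [mutInfo, hjoint, hX, hA, hrow, sum_const, card_univ, nsmul_eq_mul]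
  ring

theorem example_mutInfo_eq_general {Ω : Type*} [Fintype Ω]
    (a d : ℕ) (ha : 0 < a) (had : a < d)
    (b c : ℝ)
    (hratio : (a : ℝ) / d = b * (1 - c) / (c * (1 - b)))
    (p : Ω → ℝ)
    (X A : Ω → Fin d) (L : Ω → Bool)
    (hXunif : ∀ x, Pr p {ω | X ω = x} = (d : ℝ)⁻¹)
    (hXL : ∀ x, Pr p {ω | X ω = x ∧ L ω = true} = Pr p {ω | X ω = x} * b)
    (hA0 : ∀ (x t : Fin d),
      Pr p {ω | X ω = x ∧ L ω = false ∧ A ω = t} =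
        Pr p {ω | X ω = x ∧ L ω = false} * (d : ℝ)⁻¹)
    (hA1in : ∀ (x t : Fin d), (∃ j < a, (t : ℕ) = ((x : ℕ) * a + j) % d) →
      Pr p {ω | X ω = x ∧ L ω = true ∧ A ω = t} =
        Pr p {ω | X ω = x ∧ L ω = true} * (a : ℝ)⁻¹)
    (hA1out : ∀ (x t : Fin d), ¬(∃ j < a, (t : ℕ) = ((x : ℕ) * a + j) % d) →
      Pr p {ω | X ω = x ∧ L ω = true ∧ A ω = t} = 0) :
    mutInfo p A X = (-b * Real.logb 2 (1 - c) + c * Real.logb 2 (1 - b)) / c := by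
  have hd : (d : ℝ) ≠ 0 := Nat.cast_ne_zero.2 (ha.trans had).ne'
  have ha' : (a : ℝ) = d * (b * (1 - c) / (c * (1 - b))) := by
    rw [← hratio, mul_div_cancel₀ _ hd]
  obtain ⟨⟨hb, hc₁⟩, hc, hb₁⟩ : (b ≠ 0 ∧ 1 - c ≠ 0) ∧ c ≠ 0 ∧ 1 - b ≠ 0 := by
    simpa [-ne_eq, div_ne_zero_iff, mul_ne_zero_iff] using
      (hratio ▸ div_ne_zero (Nat.cast_ne_zero.2 ha.ne') hd : b * (1 - c) / (c * (1 - b)) ≠ 0)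
  have hX0 : ∀ x, Pr p {ω | X ω = x ∧ L ω = false} = (1 - b) / d := fun x => by
    have := Pr_eq_sum_Pr_and_eq p L (X · = x)
    rw [Fintype.sum_bool, hXunif, hXL, hXunif] at this
    linear_combination -this
  have hjoint : ∀ t x, Pr p {ω | A ω = t ∧ X ω = x} =
      (d : ℝ)⁻¹ * (d : ℝ)⁻¹ * if InWindow a d x t then (1 - b) / (1 - c) else 1 - b := by
    intro t x
    rw [Pr_and_eq_add_Pr_and_bool p X A L, hA0, hX0]
    split_ifs with hxt
    · rw [hA1in x t hxt, hXL, hXunif, ha']; field_simp; ring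
    · rw [hA1out x t hxt]; ring
  have hA : ∀ t, Pr p {ω | A ω = t} = (d : ℝ)⁻¹ := fun t => by
    rw [Pr_eq_sum_Pr_and_eq p X, Finset.sum_congr rfl fun x _ => hjoint t x, ← mul_sum,
      sum_ite_eq_of_card_filter _ (card_filter_inWindow had.le t), Fintype.card_fin, ha']
    field_simp
    ring
  rw [mutInfo_eq_of_joint_eq_mul_ite p X A (fun t x => InWindow a d x t)
    (card_filter_inWindow had.le) hXunif hA (by positivity) hjoint, Fintype.card_fin,
    Real.logb_div hb₁ hc₁, ha']
  field_simp
  ring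

/-- Example: achieving the bound. With `X` uniform on `{1,…,d}`
(encoded as `Fin d`, where `x : Fin d` stands for the value `x+1`), `L`
independent of `X` with `Pr(L=1)=b`, `A` uniform on `{1,…,d}` given `L=0`
(independent of `X`), and `A` uniform on
`S_x = {1+(x−1)a, …, xa} mod d` given `L=1, X=x`
(in the 0-based encoding, `t ∈ S_x ↔ ∃ j < a, t = (x·a+j) % d`),
one has `I(A;X) = (−b·log₂(1−c) + c·log₂(1−b))/c`. -/
theorem example_mutInfo_eq {Ω : Type*} [Fintype Ω]
    (a d : ℕ) (ha : 0 < a) (had : a < d)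
    (b c : ℝ) (hb : 0 < b) (hbc : b < c) (hc : c < 1)
    (hratio : (a : ℝ) / d = b * (1 - c) / (c * (1 - b)))
    (p : Ω → ℝ) (hp : ∀ ω, 0 ≤ p ω) (hp1 : ∑ ω, p ω = 1)
    (X A : Ω → Fin d) (L : Ω → Bool)
    (hXunif : ∀ x, Pr p {ω | X ω = x} = (d : ℝ)⁻¹)
    (hL : Pr p {ω | L ω = true} = b)
    (hXL : ∀ x, Pr p {ω | X ω = x ∧ L ω = true} = Pr p {ω | X ω = x} * b)
    (hA0 : ∀ (x t : Fin d),
      Pr p {ω | X ω = x ∧ L ω = false ∧ A ω = t} =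
        Pr p {ω | X ω = x ∧ L ω = false} * (d : ℝ)⁻¹)
    (hA1in : ∀ (x t : Fin d), (∃ j < a, (t : ℕ) = ((x : ℕ) * a + j) % d) →
      Pr p {ω | X ω = x ∧ L ω = true ∧ A ω = t} =
        Pr p {ω | X ω = x ∧ L ω = true} * (a : ℝ)⁻¹)
    (hA1out : ∀ (x t : Fin d), ¬(∃ j < a, (t : ℕ) = ((x : ℕ) * a + j) % d) →
      Pr p {ω | X ω = x ∧ L ω = true ∧ A ω = t} = 0) :
    mutInfo p A X = (-b * Real.logb 2 (1 - c) + c * Real.logb 2 (1 - b)) / c :=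
  example_mutInfo_eq_general a d ha had b c hratio p X A L hXunif hXL hA0 hA1in hA1out
end

section
/- Let a, d be positive integers with 0 < a < d and let 0 < b < c < 1 satisfy a/d = b(1−c)/(c(1−b)). Let X be uniformly distributed on {1,…,d}, let L be {0,1}-valued with Pr(L=1)=b and independent of X, and let the message A be distributed as follows: given L=0, A is uniform on {1,…,d} and independent of X; given L=1 and X=x, A is uniform on the set S_x := {1+(x−1)a, 2+(x−1)a, …, xa} reduced modulo d into {1,…,d}. Then for every x ∈ {1,…,d}: if t ∈ S_x then Pr(L=1 | A=t, X=x) = c, and if t ∉ S_x then Pr(L=1 | A=t, X=x) = 0. -/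
/-!
Given `X = x`, the event `A = t` has joint weight `d⁻¹ · b · a⁻¹` with `L = 1` when `t ∈ S_x`
(and `0` otherwise) and `d⁻¹ · (1 - b) · d⁻¹` with `L = 0`, so by Bayes' rule the posterior odds of
`L = 1` are `b d / ((1 - b) a)`. The relation `a / d = b (1 - c) / (c (1 - b))` says exactly that
these odds equal `c / (1 - c)`.
-/

open Finset

section Bayes

variable {Ω : Type*} [Fintype Ω] (p : Ω → ℝ)

theorem Pr_eq_inter_add_inter_compl (E F : Set Ω) :
    Pr p E = Pr p (E ∩ F) + Pr p (E ∩ Fᶜ) := by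
  conv_lhs => rw [Pr, ← Set.indicator_self_add_compl F p]
  simp only [Pr, Set.indicator_add', Pi.add_apply, Finset.sum_add_distrib,
    Set.indicator_indicator]

theorem Pr_eq_add_of_bool (P : Ω → Prop) (L : Ω → Bool) :
    Pr p {ω | P ω} = Pr p {ω | P ω ∧ L ω = true} + Pr p {ω | P ω ∧ L ω = false} := by
  rw [Pr_eq_inter_add_inter_compl p _ {ω | L ω = true}, Set.ofPred_and, Set.ofPred_and,
    Set.compl_ofPred]
  simp only [Bool.not_eq_true]

theorem cPr_eq_div_add (E F : Set Ω) :
    cPr p E F = Pr p (E ∩ F) / (Pr p (E ∩ F) + Pr p (Eᶜ ∩ F)) := by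
  rw [cPr, Pr_eq_inter_add_inter_compl p F E, Set.inter_comm F, Set.inter_comm F]

end Bayes

theorem bayes_posterior_eq_of_ratio {a d b c : ℝ} (ha : 0 < a) (hd : 0 < d) (hb : 0 < b)
    (hbc : b < c) (hc : c < 1) (hratio : a / d = b * (1 - c) / (c * (1 - b))) :
    d⁻¹ * b * a⁻¹ / (d⁻¹ * b * a⁻¹ + d⁻¹ * (1 - b) * d⁻¹) = c := by
  have hc0 : 0 < c := hb.trans hbc
  have hb1 : 0 < 1 - b := by linarith
  rw [div_eq_div_iff hd.ne' (by positivity)] at hratio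
  field_simp
  linear_combination -hratio

theorem example_posterior_eq_general {Ω : Type*} [Fintype Ω]
    (a d : ℕ)
    (b c : ℝ) (hb : 0 < b) (hbc : b < c) (hc : c < 1)
    (hratio : (a : ℝ) / d = b * (1 - c) / (c * (1 - b)))
    (p : Ω → ℝ)
    (X A : Ω → Fin d) (L : Ω → Bool)
    (hXunif : ∀ x, Pr p {ω | X ω = x} = (d : ℝ)⁻¹)
    (hXL : ∀ x, Pr p {ω | X ω = x ∧ L ω = true} = Pr p {ω | X ω = x} * b)
    (hA0 : ∀ (x t : Fin d),
      Pr p {ω | X ω = x ∧ L ω = false ∧ A ω = t} =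
        Pr p {ω | X ω = x ∧ L ω = false} * (d : ℝ)⁻¹)
    (hA1in : ∀ (x t : Fin d), (∃ j < a, (t : ℕ) = ((x : ℕ) * a + j) % d) →
      Pr p {ω | X ω = x ∧ L ω = true ∧ A ω = t} =
        Pr p {ω | X ω = x ∧ L ω = true} * (a : ℝ)⁻¹)
    (hA1out : ∀ (x t : Fin d), ¬(∃ j < a, (t : ℕ) = ((x : ℕ) * a + j) % d) →
      Pr p {ω | X ω = x ∧ L ω = true ∧ A ω = t} = 0) :
    ∀ (x t : Fin d),
      ((∃ j < a, (t : ℕ) = ((x : ℕ) * a + j) % d) →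
        cPr p {ω | L ω = true} {ω | A ω = t ∧ X ω = x} = c) ∧
      (¬(∃ j < a, (t : ℕ) = ((x : ℕ) * a + j) % d) →
        cPr p {ω | L ω = true} {ω | A ω = t ∧ X ω = x} = 0) := by
  intro x t
  have hXf : Pr p {ω | X ω = x ∧ L ω = false} = (d : ℝ)⁻¹ * (1 - b) := by
    have hsplit := Pr_eq_add_of_bool p (X · = x) L
    rw [hXL, hXunif] at hsplit
    linarith
  have hposterior : cPr p {ω | L ω = true} {ω | A ω = t ∧ X ω = x} =
      Pr p {ω | X ω = x ∧ L ω = true ∧ A ω = t} /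
        (Pr p {ω | X ω = x ∧ L ω = true ∧ A ω = t} +
          Pr p {ω | X ω = x ∧ L ω = false ∧ A ω = t}) := by
    rw [cPr_eq_div_add, Set.compl_ofPred]
    simp only [← Set.ofPred_and, Bool.not_eq_true, and_comm, and_left_comm]
  refine ⟨fun hin => ?_, fun hout => ?_⟩
  · have ha : 0 < a := hin.elim fun j hj => j.zero_le.trans_lt hj.1
    rw [hposterior, hA1in x t hin, hA0, hXL, hXunif, hXf]
    exact bayes_posterior_eq_of_ratio (by exact_mod_cast ha) (by exact_mod_cast x.pos) hb hbc hc hratio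
  · rw [hposterior, hA1out x t hout, zero_div]

/-- Example: posterior suspicion. In the setting of the example
protocol, for every `x` and message `t`: if `t ∈ S_x` then
`Pr(L=1 | A=t, X=x) = c`, and if `t ∉ S_x` then `Pr(L=1 | A=t, X=x) = 0`.
(`Fin d` is the 0-based encoding of `{1,…,d}`, and
`t ∈ S_x ↔ ∃ j < a, t = (x·a+j) % d`.) -/
theorem example_posterior_eq {Ω : Type*} [Fintype Ω]
    (a d : ℕ) (ha : 0 < a) (had : a < d)
    (b c : ℝ) (hb : 0 < b) (hbc : b < c) (hc : c < 1)
    (hratio : (a : ℝ) / d = b * (1 - c) / (c * (1 - b)))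
    (p : Ω → ℝ) (hp : ∀ ω, 0 ≤ p ω) (hp1 : ∑ ω, p ω = 1)
    (X A : Ω → Fin d) (L : Ω → Bool)
    (hXunif : ∀ x, Pr p {ω | X ω = x} = (d : ℝ)⁻¹)
    (hL : Pr p {ω | L ω = true} = b)
    (hXL : ∀ x, Pr p {ω | X ω = x ∧ L ω = true} = Pr p {ω | X ω = x} * b)
    (hA0 : ∀ (x t : Fin d),
      Pr p {ω | X ω = x ∧ L ω = false ∧ A ω = t} =
        Pr p {ω | X ω = x ∧ L ω = false} * (d : ℝ)⁻¹)
    (hA1in : ∀ (x t : Fin d), (∃ j < a, (t : ℕ) = ((x : ℕ) * a + j) % d) →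
      Pr p {ω | X ω = x ∧ L ω = true ∧ A ω = t} =
        Pr p {ω | X ω = x ∧ L ω = true} * (a : ℝ)⁻¹)
    (hA1out : ∀ (x t : Fin d), ¬(∃ j < a, (t : ℕ) = ((x : ℕ) * a + j) % d) →
      Pr p {ω | X ω = x ∧ L ω = true ∧ A ω = t} = 0) :
    ∀ (x t : Fin d),
      ((∃ j < a, (t : ℕ) = ((x : ℕ) * a + j) % d) →
        cPr p {ω | L ω = true} {ω | A ω = t ∧ X ω = x} = c) ∧
      (¬(∃ j < a, (t : ℕ) = ((x : ℕ) * a + j) % d) →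
        cPr p {ω | L ω = true} {ω | A ω = t ∧ X ω = x} = 0) :=
  example_posterior_eq_general a d b c hb hbc hc hratio p X A L hXunif hXL hA0 hA1in hA1out
end

section
/- Let n and l be integers with 0 < l < n, and for an integer k with 0 ≤ k ≤ n define the hypergeometric probability P_F(k) := C(2l,k)·C(2n−2l,n−k)/C(2n,n) (the probability that a uniformly random n-element subset of a 2n-element set containing 2l marked elements contains exactly k marked elements) and the binomial probability P_I(k) := C(n,k)·(l/n)^k·(1−l/n)^{n−k}. Then for every k with 0 ≤ k ≤ n, P_F(k) ≤ 2·P_I(k). -/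
/-!
Write `n = a + b` with `a = l`. Up to the normalisations `C(2n,n)` and `n ^ n`, the two sides are
`f k = C(2a,k) C(2b,n-k)` and `g k = C(n,k) a^k b^(n-k)`. Comparing `f (k+1) / f k` with
`g (k+1) / g k` shows that `f / g` decreases for `k ≥ a`, and by the symmetry `a ↔ b`, `k ↔ n - k`
it increases for `k ≤ a`; so it suffices to treat `k = a`. There, writing every factorial as
`j! = s j * √(2j) (j/e)^j` with the Stirling sequence `s`, all powers cancel and the claim becomes
`s(2a) s(2b) s(n) √2 ≤ 2 s(2n) s(a) s(b)`. This holds because `s` is decreasing with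
`√π ≤ s j ≤ s 1 = e/√2`, and `e ≤ 2√π`.
-/

open Real Nat

namespace Stirling

noncomputable def stirlingDenom (n : ℕ) : ℝ := √(2 * n) * (n / exp 1) ^ n

lemma stirlingDenom_nonneg (n : ℕ) : 0 ≤ stirlingDenom n := by
  unfold stirlingDenom; positivity

lemma stirlingSeq_nonneg (n : ℕ) : 0 ≤ stirlingSeq n := by
  unfold stirlingSeq; positivity

lemma factorial_eq_stirlingSeq_mul_stirlingDenom {n : ℕ} (hn : n ≠ 0) :
    (n ! : ℝ) = stirlingSeq n * stirlingDenom n := by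
  have : (0 : ℝ) < n := by positivity
  rw [stirlingSeq, stirlingDenom, div_mul_cancel₀ _ (by positivity)]

lemma stirlingSeq_le_of_le {m n : ℕ} (hm : m ≠ 0) (hmn : m ≤ n) :
    stirlingSeq n ≤ stirlingSeq m := by
  obtain ⟨m, rfl⟩ := exists_eq_succ_of_ne_zero hm
  obtain ⟨n, rfl⟩ := exists_eq_succ_of_ne_zero (by omega : n ≠ 0)
  exact stirlingSeq'_antitone (by omega : m ≤ n)

lemma stirlingSeq_mul_sqrt_two_le {n : ℕ} (hn : n ≠ 0) :
    stirlingSeq n * √2 ≤ 2 * stirlingSeq (2 * n) := by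
  have hsn : stirlingSeq n ≤ exp 1 / √2 :=
    stirlingSeq_one ▸ stirlingSeq_le_of_le one_ne_zero (by omega)
  have he : exp 1 / 2 ≤ √π := by
    rw [Real.le_sqrt (by positivity) pi_pos.le]
    nlinarith [exp_one_lt_three, pi_gt_three, exp_pos 1]
  calc stirlingSeq n * √2 ≤ exp 1 / √2 * √2 := by gcongr
    _ = 2 * (exp 1 / 2) := by field_simp
    _ ≤ 2 * √π := by gcongr
    _ ≤ 2 * stirlingSeq (2 * n) := by gcongr; exact sqrt_pi_le_stirlingSeq (by omega)

lemma stirlingDenom_mul_eq_sqrt_two_mul (a b : ℕ) :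
    stirlingDenom (2 * a) * stirlingDenom (2 * b) * stirlingDenom (a + b) *
        (a + b : ℝ) ^ (a + b) =
      √2 * (stirlingDenom (2 * (a + b)) * stirlingDenom a * stirlingDenom b *
        (a : ℝ) ^ a * (b : ℝ) ^ b) := by
  have hsqrt : √(2 * (2 * a : ℝ)) * √(2 * (2 * b : ℝ)) * √(2 * (a + b : ℝ)) =
      √2 * (√(2 * (2 * (a + b) : ℝ)) * √(2 * a : ℝ) * √(2 * b : ℝ)) := by
    simp (disch := positivity) only [← Real.sqrt_mul]
    congr 1; ring
  have hpow : (2 * a / exp 1 : ℝ) ^ (2 * a) * (2 * b / exp 1) ^ (2 * b) *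
      ((a + b : ℝ) / exp 1) ^ (a + b) * (a + b : ℝ) ^ (a + b) =
      (2 * (a + b : ℝ) / exp 1) ^ (2 * (a + b)) * (a / exp 1) ^ a * (b / exp 1) ^ b *
        (a : ℝ) ^ a * (b : ℝ) ^ b := by
    simp only [div_pow, mul_pow]
    generalize (a + b : ℝ) = N
    ring
  simp only [stirlingDenom]
  push_cast
  linear_combination
    (2 * a / exp 1 : ℝ) ^ (2 * a) * (2 * b / exp 1) ^ (2 * b) * ((a + b : ℝ) / exp 1) ^ (a + b) *
      (a + b : ℝ) ^ (a + b) * hsqrt +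
    √2 * (√(2 * (2 * (a + b) : ℝ)) * √(2 * a : ℝ) * √(2 * b : ℝ)) * hpow

end Stirling

open Stirling

theorem factorial_two_mul_mul_factorial_two_mul_le {a b : ℕ} (ha : a ≠ 0) (hb : b ≠ 0) :
    ((2 * a)! * (2 * b)! * (a + b)! : ℝ) * (a + b : ℝ) ^ (a + b) ≤
      2 * (2 * (a + b))! * a ! * b ! * (a : ℝ) ^ a * (b : ℝ) ^ b := by
  set D := stirlingDenom (2 * (a + b)) * stirlingDenom a * stirlingDenom b *
    (a : ℝ) ^ a * (b : ℝ) ^ b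
  have hD : 0 ≤ D := by
    have := stirlingDenom_nonneg (2 * (a + b))
    have := stirlingDenom_nonneg a
    have := stirlingDenom_nonneg b
    positivity
  have hs : stirlingSeq (2 * a) * stirlingSeq (2 * b) * (stirlingSeq (a + b) * √2) ≤
      stirlingSeq a * stirlingSeq b * (2 * stirlingSeq (2 * (a + b))) :=
    mul_le_mul
      (mul_le_mul (stirlingSeq_le_of_le ha (by omega)) (stirlingSeq_le_of_le hb (by omega))
        (stirlingSeq_nonneg _) (stirlingSeq_nonneg _))
      (stirlingSeq_mul_sqrt_two_le (by omega))
      (mul_nonneg (stirlingSeq_nonneg _) (sqrt_nonneg 2))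
      (mul_nonneg (stirlingSeq_nonneg a) (stirlingSeq_nonneg b))
  rw [factorial_eq_stirlingSeq_mul_stirlingDenom (n := 2 * a) (by omega),
    factorial_eq_stirlingSeq_mul_stirlingDenom (n := 2 * b) (by omega),
    factorial_eq_stirlingSeq_mul_stirlingDenom (n := a + b) (by omega),
    factorial_eq_stirlingSeq_mul_stirlingDenom (n := 2 * (a + b)) (by omega),
    factorial_eq_stirlingSeq_mul_stirlingDenom ha, factorial_eq_stirlingSeq_mul_stirlingDenom hb]
  calc _ = stirlingSeq (2 * a) * stirlingSeq (2 * b) * stirlingSeq (a + b) *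
        (stirlingDenom (2 * a) * stirlingDenom (2 * b) * stirlingDenom (a + b) *
          (a + b : ℝ) ^ (a + b)) := by ring
    _ = stirlingSeq (2 * a) * stirlingSeq (2 * b) * (stirlingSeq (a + b) * √2) * D := by
        rw [stirlingDenom_mul_eq_sqrt_two_mul]; ring
    _ ≤ stirlingSeq a * stirlingSeq b * (2 * stirlingSeq (2 * (a + b))) * D := by gcongr
    _ = _ := by ring

theorem choose_mul_choose_mul_pow_le {a b : ℕ} (ha : a ≠ 0) (hb : b ≠ 0) :
    ((2 * a).choose a * (2 * b).choose b : ℝ) * (a + b : ℝ) ^ (a + b) ≤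
      2 * (2 * (a + b)).choose (a + b) * ((a + b).choose a * (a : ℝ) ^ a * (b : ℝ) ^ b) := by
  have hA : ((2 * a).choose a * a ! * a ! : ℝ) = (2 * a)! := by
    rw [two_mul]; exact_mod_cast add_choose_mul_factorial_mul_factorial a a
  have hB : ((2 * b).choose b * b ! * b ! : ℝ) = (2 * b)! := by
    rw [two_mul]; exact_mod_cast add_choose_mul_factorial_mul_factorial b b
  have hN : ((2 * (a + b)).choose (a + b) * (a + b)! * (a + b)! : ℝ) = (2 * (a + b))! := by
    rw [two_mul]; exact_mod_cast add_choose_mul_factorial_mul_factorial (a + b) (a + b)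
  have hAB : ((a + b).choose a * b ! * a ! : ℝ) = (a + b)! := by
    rw [add_comm a b]; exact_mod_cast add_choose_mul_factorial_mul_factorial b a
  have hpos : (0 : ℝ) < a ! * a ! * b ! * b ! * (a + b)! := by positivity
  refine le_of_mul_le_mul_right ?_ hpos
  calc _ = ((2 * a)! * (2 * b)! * (a + b)! : ℝ) * (a + b : ℝ) ^ (a + b) := by
        rw [← hA, ← hB]; ring
    _ ≤ 2 * (2 * (a + b))! * a ! * b ! * (a : ℝ) ^ a * (b : ℝ) ^ b :=
        factorial_two_mul_mul_factorial_two_mul_le ha hb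
    _ = _ := by rw [← hN, ← hAB]; ring

/-- `P_F(k) = hypergeomWeight l (n - l) k / C(2n,n)`. -/
def hypergeomWeight (a b k : ℕ) : ℕ := (2 * a).choose k * (2 * b).choose (a + b - k)

/-- `P_I(k) = binomialWeight l (n - l) k / n ^ n`. -/
def binomialWeight (a b k : ℕ) : ℕ := (a + b).choose k * a ^ k * b ^ (a + b - k)

section Weights

variable {a b k : ℕ}

lemma binomialWeight_pos (ha : 0 < a) (hb : 0 < b) (hk : k ≤ a + b) :
    0 < binomialWeight a b k := by
  unfold binomialWeight
  have := choose_pos hk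
  positivity

lemma hypergeomWeight_swap (hk : k ≤ a + b) :
    hypergeomWeight b a (a + b - k) = hypergeomWeight a b k := by
  unfold hypergeomWeight
  rw [add_comm b a, Nat.sub_sub_self hk, mul_comm]

lemma binomialWeight_swap (hk : k ≤ a + b) :
    binomialWeight b a (a + b - k) = binomialWeight a b k := by
  unfold binomialWeight
  rw [add_comm b a, Nat.sub_sub_self hk, choose_symm hk]
  ring

lemma two_mul_sub_mul_le_two_mul_sub_mul {s : ℕ} (hak : a ≤ k) (hks : k + s + 1 = a + b) :
    (2 * a - k) * b ≤ (2 * b - s) * a := by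
  rcases le_or_gt k (2 * a) with hk | hk
  · have hs : s ≤ 2 * b := by omega
    zify [hk, hs]
    nlinarith [Nat.mul_le_mul_right (a + b) hak]
  · simp [Nat.sub_eq_zero_of_le hk.le]

lemma hypergeomWeight_succ_mul_le (hak : a ≤ k) (hk : k < a + b) :
    hypergeomWeight a b (k + 1) * binomialWeight a b k ≤
      hypergeomWeight a b k * binomialWeight a b (k + 1) := by
  obtain ⟨s, hs⟩ : ∃ s, k + s + 1 = a + b := ⟨a + b - k - 1, by omega⟩
  unfold hypergeomWeight binomialWeight
  rw [show a + b - k = s + 1 by omega, show a + b - (k + 1) = s by omega]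
  have i1 := choose_succ_right_eq (2 * a) k
  have i2 := choose_succ_right_eq (2 * b) s
  have i3 : (a + b).choose (k + 1) * (k + 1) = (a + b).choose k * (s + 1) := by
    rw [choose_succ_right_eq, show a + b - k = s + 1 by omega]
  set X := (2 * a).choose k * (2 * b).choose s * (a + b).choose k * (s + 1) * a ^ k * b ^ s
  refine Nat.le_of_mul_le_mul_right (c := (k + 1) * (s + 1)) ?_ (by positivity)
  calc _ = (2 * a).choose (k + 1) * (k + 1) *
        ((2 * b).choose s * (a + b).choose k * (s + 1) * a ^ k * b ^ s * b) := by ring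
    _ = X * ((2 * a - k) * b) := by rw [i1]; ring
    _ ≤ X * ((2 * b - s) * a) :=
        Nat.mul_le_mul_left X (two_mul_sub_mul_le_two_mul_sub_mul hak hs)
    _ = (2 * a).choose k * a ^ (k + 1) * b ^ s *
        ((2 * b).choose s * (2 * b - s) * ((a + b).choose k * (s + 1))) := by ring
    _ = _ := by rw [← i2, ← i3]; ring

lemma hypergeomWeight_mul_binomialWeight_le_of_le (ha : 0 < a) (hb : 0 < b)
    (hak : a ≤ k) (hk : k ≤ a + b) :
    hypergeomWeight a b k * binomialWeight a b a ≤
      hypergeomWeight a b a * binomialWeight a b k := by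
  induction k, hak using Nat.le_induction with
  | base => rfl
  | succ k hak ih =>
    refine Nat.le_of_mul_le_mul_right ?_ (binomialWeight_pos ha hb (k := k) (by omega))
    calc _ = hypergeomWeight a b (k + 1) * binomialWeight a b k * binomialWeight a b a := by ring
      _ ≤ hypergeomWeight a b k * binomialWeight a b (k + 1) * binomialWeight a b a :=
          Nat.mul_le_mul_right _ (hypergeomWeight_succ_mul_le hak (by omega))
      _ = hypergeomWeight a b k * binomialWeight a b a * binomialWeight a b (k + 1) := by ring
      _ ≤ hypergeomWeight a b a * binomialWeight a b k * binomialWeight a b (k + 1) :=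
          Nat.mul_le_mul_right _ (ih (by omega))
      _ = _ := by ring

theorem hypergeomWeight_mul_binomialWeight_le (ha : 0 < a) (hb : 0 < b) (hk : k ≤ a + b) :
    hypergeomWeight a b k * binomialWeight a b a ≤
      hypergeomWeight a b a * binomialWeight a b k := by
  rcases le_total a k with hak | hka
  · exact hypergeomWeight_mul_binomialWeight_le_of_le ha hb hak hk
  · have h := hypergeomWeight_mul_binomialWeight_le_of_le hb ha (k := a + b - k) (by omega)
      (by omega)
    have hH : hypergeomWeight b a b = hypergeomWeight a b a := by
      simpa using hypergeomWeight_swap (a := a) (b := b) (k := a) le_self_add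
    have hB : binomialWeight b a b = binomialWeight a b a := by
      simpa using binomialWeight_swap (a := a) (b := b) (k := a) le_self_add
    rwa [hypergeomWeight_swap hk, binomialWeight_swap hk, hH, hB] at h

theorem hypergeomWeight_mul_pow_le (ha : 0 < a) (hb : 0 < b) (hk : k ≤ a + b) :
    (hypergeomWeight a b k : ℝ) * (a + b : ℝ) ^ (a + b) ≤
      2 * (2 * (a + b)).choose (a + b) * binomialWeight a b k := by
  have hmax : (hypergeomWeight a b k * binomialWeight a b a : ℝ) ≤
      hypergeomWeight a b a * binomialWeight a b k := by
    exact_mod_cast hypergeomWeight_mul_binomialWeight_le ha hb hk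
  have hcentral : (hypergeomWeight a b a : ℝ) * (a + b : ℝ) ^ (a + b) ≤
      2 * (2 * (a + b)).choose (a + b) * binomialWeight a b a := by
    unfold hypergeomWeight binomialWeight
    push_cast [Nat.add_sub_cancel_left]
    exact choose_mul_choose_mul_pow_le ha.ne' hb.ne'
  have hBa : (0 : ℝ) < binomialWeight a b a := by
    exact_mod_cast binomialWeight_pos ha hb le_self_add
  refine le_of_mul_le_mul_right ?_ hBa
  calc _ = (hypergeomWeight a b k * binomialWeight a b a : ℝ) * (a + b : ℝ) ^ (a + b) := by ring
    _ ≤ hypergeomWeight a b a * binomialWeight a b k * (a + b : ℝ) ^ (a + b) := by gcongr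
    _ = hypergeomWeight a b a * (a + b : ℝ) ^ (a + b) * binomialWeight a b k := by ring
    _ ≤ 2 * (2 * (a + b)).choose (a + b) * binomialWeight a b a * binomialWeight a b k := by
        gcongr
    _ = _ := by ring

end Weights

/-- the hypergeometric probability
`P_F(k) = C(2l,k)·C(2n−2l,n−k)/C(2n,n)` is at most twice the binomial
probability `P_I(k) = C(n,k)·(l/n)^k·(1−l/n)^{n−k}`. -/
theorem hypergeom_le_two_mul_binomial (n l : ℕ) (hl : 0 < l) (hln : l < n)
    (k : ℕ) (hk : k ≤ n) :
    ((2 * l).choose k : ℝ) * ((2 * n - 2 * l).choose (n - k) : ℝ) /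
        ((2 * n).choose n : ℝ) ≤
      2 * ((n.choose k : ℝ) * ((l : ℝ) / n) ^ k * (1 - (l : ℝ) / n) ^ (n - k)) := by
  obtain ⟨b, rfl⟩ : ∃ b, n = l + b := ⟨n - l, by omega⟩
  have key := hypergeomWeight_mul_pow_le hl (by omega : 0 < b) hk
  unfold hypergeomWeight binomialWeight at key
  push_cast at key
  have hC : (0 : ℝ) < (2 * (l + b)).choose (l + b) := by exact_mod_cast choose_pos (by omega)
  have hsplit : ((l : ℝ) + b) ^ k * ((l : ℝ) + b) ^ (l + b - k) = ((l : ℝ) + b) ^ (l + b) := by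
    rw [← pow_add, Nat.add_sub_cancel' hk]
  have hcompl : 1 - (l : ℝ) / (l + b : ℕ) = b / (l + b) := by push_cast; field_simp; ring
  rw [show 2 * (l + b) - 2 * l = 2 * b by omega, hcompl, div_le_iff₀ hC]
  calc _ ≤ 2 * (2 * (l + b)).choose (l + b) *
        ((l + b).choose k * (l : ℝ) ^ k * (b : ℝ) ^ (l + b - k)) / ((l : ℝ) + b) ^ (l + b) :=
        (le_div_iff₀ (by positivity)).2 key
    _ = _ := by push_cast; rw [div_pow, div_pow, ← hsplit]; field_simp
end

section
/- Let n and l be integers with 0 < l < n, and for 0 ≤ k ≤ n define P_F(k) := C(2l,k)·C(2n−2l,n−k)/C(2n,n) and P_I(k) := C(n,k)·(l/n)^k·(1−l/n)^{n−k}. Then the ratio P_F(k)/P_I(k) is maximized at k = l; equivalently, for every k with 0 ≤ k ≤ n, P_F(k)·P_I(l) ≤ P_F(l)·P_I(k). -/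
/-!
Write `n = a + b` with `a = l`. Clearing the denominators `C(2n,n)` and `n^n` turns the claim into
an inequality between natural numbers, which is invariant under `(a, b, k) ↦ (b, a, n - k)`; so we
may assume `k = a - d`. Expressing every binomial coefficient through factorials, it becomes
`a^d · b!/(b-d)! ≤ b^d · (a+d)!/a!`, which holds factor by factor:
`b (b-1) ⋯ (b-d+1) ≤ b^d` and `a^d ≤ (a+1) ⋯ (a+d)`.
-/

open scoped Nat

theorem Nat.pow_mul_factorial_mul_factorial_le (a b d : ℕ) (hd : d ≤ b) :
    a ^ d * a ! * b ! ≤ b ^ d * (a + d)! * (b - d)! := by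
  have hasc : a ^ d ≤ (a + 1).ascFactorial d :=
    (Nat.pow_le_pow_left a.le_succ d).trans (Nat.pow_succ_le_ascFactorial _ d)
  rw [← Nat.factorial_mul_ascFactorial, ← Nat.factorial_mul_descFactorial hd]
  calc a ^ d * a ! * ((b - d)! * b.descFactorial d)
      = a ! * (b - d)! * (b.descFactorial d * a ^ d) := by ring
    _ ≤ a ! * (b - d)! * (b ^ d * (a + 1).ascFactorial d) :=
      Nat.mul_le_mul_left _ (Nat.mul_le_mul (Nat.descFactorial_le_pow b d) hasc)
    _ = b ^ d * (a ! * (a + 1).ascFactorial d) * (b - d)! := by ring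

theorem Nat.choose_mul_factorial_mul_factorial_of_eq_add {n i j : ℕ} (h : n = i + j) :
    n.choose i * i ! * j ! = n ! := by
  subst h
  rw [Nat.choose_symm_add, Nat.add_choose_mul_factorial_mul_factorial]

theorem hypergeom_binomial_cross_le_of_le (a b k : ℕ) (hk : k ≤ a) :
    (2 * a).choose k * (2 * b).choose (a + b - k) * ((a + b).choose a * a ^ a * b ^ b) ≤
      (2 * a).choose a * (2 * b).choose b * ((a + b).choose k * a ^ k * b ^ (a + b - k)) := by
  obtain ⟨d, rfl⟩ := Nat.exists_eq_add_of_le hk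
  rw [show k + d + b - k = b + d by omega]
  rcases lt_or_ge b d with hbd | hdb
  · simp [Nat.choose_eq_zero_of_lt (show 2 * b < b + d by omega)]
  set a := k + d
  have hkA := Nat.choose_mul_factorial_mul_factorial_of_eq_add (show 2 * a = k + (a + d) by omega)
  have haA := Nat.choose_mul_factorial_mul_factorial_of_eq_add (show 2 * a = a + a by omega)
  have hbB :=
    Nat.choose_mul_factorial_mul_factorial_of_eq_add (show 2 * b = (b + d) + (b - d) by omega)
  have hbb := Nat.choose_mul_factorial_mul_factorial_of_eq_add (show 2 * b = b + b by omega)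
  have hab := Nat.choose_mul_factorial_mul_factorial_of_eq_add (show a + b = a + b from rfl)
  have hkb := Nat.choose_mul_factorial_mul_factorial_of_eq_add (show a + b = k + (b + d) by omega)
  have hM : 0 < k ! * (a + d)! * (b + d)! * (b - d)! := by positivity
  refine Nat.le_of_mul_le_mul_right ?_ hM
  calc (2 * a).choose k * (2 * b).choose (b + d) * ((a + b).choose a * a ^ a * b ^ b) *
        (k ! * (a + d)! * (b + d)! * (b - d)!)
      = ((2 * a).choose k * k ! * (a + d)!) * ((2 * b).choose (b + d) * (b + d)! * (b - d)!) *
          (a + b).choose a * a ^ a * b ^ b := by ring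
    _ = ((2 * a).choose a * a ! * a !) * ((2 * b).choose b * b ! * b !) *
          (a + b).choose a * a ^ a * b ^ b := by rw [hkA, hbB, haA, hbb]
    _ = (2 * a).choose a * (2 * b).choose b * ((a + b).choose a * a ! * b !) * a ^ k * b ^ b *
          (a ^ d * a ! * b !) := by ring
    _ = (2 * a).choose a * (2 * b).choose b * ((a + b).choose k * k ! * (b + d)!) * a ^ k * b ^ b *
          (a ^ d * a ! * b !) := by rw [hab, hkb]
    _ ≤ (2 * a).choose a * (2 * b).choose b * ((a + b).choose k * k ! * (b + d)!) * a ^ k *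
          b ^ b * (b ^ d * (a + d)! * (b - d)!) :=
      Nat.mul_le_mul_left _ (Nat.pow_mul_factorial_mul_factorial_le a b d hdb)
    _ = (2 * a).choose a * (2 * b).choose b * ((a + b).choose k * a ^ k * b ^ (b + d)) *
          (k ! * (a + d)! * (b + d)! * (b - d)!) := by ring

theorem hypergeom_binomial_cross_le (a b k : ℕ) (hk : k ≤ a + b) :
    (2 * a).choose k * (2 * b).choose (a + b - k) * ((a + b).choose a * a ^ a * b ^ b) ≤
      (2 * a).choose a * (2 * b).choose b * ((a + b).choose k * a ^ k * b ^ (a + b - k)) := by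
  rcases le_total k a with hka | hak
  · exact hypergeom_binomial_cross_le_of_le a b k hka
  · have h := hypergeom_binomial_cross_le_of_le b a (a + b - k) (by omega)
    rw [add_comm b a, show a + b - (a + b - k) = k by omega, ← Nat.choose_symm_add (a := a),
      Nat.choose_symm hk] at h
    linarith

theorem div_pow_mul_one_sub_div_pow {K : Type*} [Field K] (x : K) {y : K} (hy : y ≠ 0)
    {j m : ℕ} (hj : j ≤ m) :
    (x / y) ^ j * (1 - x / y) ^ (m - j) = x ^ j * (y - x) ^ (m - j) / y ^ m := by
  rw [one_sub_div hy, div_pow, div_pow, div_mul_div_comm, ← pow_add, Nat.add_sub_cancel' hj]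

theorem hypergeom_binomial_ratio_max_at_l_general (n l : ℕ) (hln : l < n)
    (k : ℕ) (hk : k ≤ n) :
    (((2 * l).choose k : ℝ) * ((2 * n - 2 * l).choose (n - k) : ℝ) /
        ((2 * n).choose n : ℝ)) *
      ((n.choose l : ℝ) * ((l : ℝ) / n) ^ l * (1 - (l : ℝ) / n) ^ (n - l)) ≤
    (((2 * l).choose l : ℝ) * ((2 * n - 2 * l).choose (n - l) : ℝ) /
        ((2 * n).choose n : ℝ)) *
      ((n.choose k : ℝ) * ((l : ℝ) / n) ^ k * (1 - (l : ℝ) / n) ^ (n - k)) := by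
  obtain ⟨b, rfl⟩ := Nat.exists_eq_add_of_le hln.le
  have hn : ((l + b : ℕ) : ℝ) ≠ 0 := Nat.cast_ne_zero.2 (by omega)
  rw [mul_assoc ((l + b).choose l : ℝ), mul_assoc ((l + b).choose k : ℝ),
    div_pow_mul_one_sub_div_pow _ hn hln.le, div_pow_mul_one_sub_div_pow _ hn hk,
    show 2 * (l + b) - 2 * l = 2 * b by omega, Nat.add_sub_cancel_left]
  have key : (((2 * l).choose k * (2 * b).choose (l + b - k) *
      ((l + b).choose l * l ^ l * b ^ b) : ℕ) : ℝ) ≤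
      ((2 * l).choose l * (2 * b).choose b *
        ((l + b).choose k * l ^ k * b ^ (l + b - k)) : ℕ) := by
    exact_mod_cast hypergeom_binomial_cross_le l b k hk
  have hden : (0 : ℝ) ≤ (2 * (l + b)).choose (l + b) * ((l + b : ℕ) : ℝ) ^ (l + b) := by
    positivity
  refine (le_of_eq ?_).trans ((div_le_div_of_nonneg_right key hden).trans_eq ?_) <;>
    push_cast <;> ring

/-- the ratio `P_F(k)/P_I(k)` of the hypergeometric probability
`P_F(k) = C(2l,k)·C(2n−2l,n−k)/C(2n,n)` to the binomial probability
`P_I(k) = C(n,k)·(l/n)^k·(1−l/n)^{n−k}` is maximized at `k = l`;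
equivalently `P_F(k)·P_I(l) ≤ P_F(l)·P_I(k)` for all `0 ≤ k ≤ n`. -/
theorem hypergeom_binomial_ratio_max_at_l (n l : ℕ) (hl : 0 < l) (hln : l < n)
    (k : ℕ) (hk : k ≤ n) :
    (((2 * l).choose k : ℝ) * ((2 * n - 2 * l).choose (n - k) : ℝ) /
        ((2 * n).choose n : ℝ)) *
      ((n.choose l : ℝ) * ((l : ℝ) / n) ^ l * (1 - (l : ℝ) / n) ^ (n - l)) ≤
    (((2 * l).choose l : ℝ) * ((2 * n - 2 * l).choose (n - l) : ℝ) /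
        ((2 * n).choose n : ℝ)) *
      ((n.choose k : ℝ) * ((l : ℝ) / n) ^ k * (1 - (l : ℝ) / n) ^ (n - k)) :=
  hypergeom_binomial_ratio_max_at_l_general n l hln k hk
end
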